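/- arXiv:1711.08622 — 5 statements merged into one kernel-verified Lean document; each statement's English description precedes it below -/
import Mathlib

section
/- Let α > 1/2 and γ > 0. Then for every t ≥ 0, (γ / Γ(2α − 1)) ∫_0^t (t − τ)^{2α−2} E_{2α−1}(γ τ^{2α−1}) dτ ≤ E_{2α−1}(γ t^{2α−1}). -/
/-!
Expanding `E_β(γ τ^β)` termwise, each term is a Beta integral:
`(γ / Γ(β)) ∫₀ᵗ (t - τ)^(β-1) (γ τ^β)^k / Γ(βk + 1) dτ = (γ t^β)^(k+1) / Γ(β(k+1) + 1)`.
All terms are nonnegative, so integral and sum commute and the left-hand side is exactly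
`E_β(γ t^β) - 1`. Convergence of the series comes from the log-convexity of `Γ`, which gives
`Γ(v + 1 + β) ≥ v^β Γ(v + 1)`.
-/

open MeasureTheory Set Filter

/-- The Mittag-Leffler function `E_β(x) = ∑_{k=0}^∞ x^k / Γ(β k + 1)`. -/
noncomputable def mittagLeffler (β x : ℝ) : ℝ :=
  ∑' k : ℕ, x ^ k / Real.Gamma (β * k + 1)

namespace Real

theorem rpow_mul_Gamma_add_one_le_Gamma_add {v β : ℝ} (hv : 0 < v) (hβ : 0 < β) :
    v ^ β * Gamma (v + 1) ≤ Gamma (v + 1 + β) := by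
  have hslope := convexOn_log_Gamma.slope_mono_adjacent (x := v) (y := v + 1) (z := v + 1 + β)
    hv (by positivity : (0:ℝ) < v + 1 + β) (by linarith) (by linarith)
  have hlog : log (Gamma (v + 1)) - log (Gamma v) = log v := by
    rw [Gamma_add_one hv.ne', log_mul hv.ne' (Gamma_pos_of_pos hv).ne', add_sub_cancel_right]
  simp only [Function.comp, add_sub_cancel_left, div_one, hlog, le_div_iff₀ hβ] at hslope
  rw [← log_le_log_iff (by positivity) (by positivity), log_mul (by positivity) (by positivity),
    log_rpow hv]
  linarith

theorem integral_rpow_mul_sub_rpow {a b t : ℝ} (ha : 0 < a) (hb : 0 < b) (ht : 0 < t) :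
    ∫ τ in (0:ℝ)..t, τ ^ (a - 1) * (t - τ) ^ (b - 1) =
      Gamma a * Gamma b / Gamma (a + b) * t ^ (a + b - 1) := by
  have hC := Complex.betaIntegral_scaled a b ht
  rw [Complex.betaIntegral_eq_Gamma_mul_div _ _ (by simpa) (by simpa)] at hC
  apply Complex.ofReal_injective
  rw [← intervalIntegral.integral_ofReal]
  convert hC using 1
  · refine intervalIntegral.integral_congr fun τ hτ => ?_
    rw [uIcc_of_le ht.le] at hτ
    push_cast
    rw [Complex.ofReal_cpow hτ.1, Complex.ofReal_cpow (sub_nonneg.2 hτ.2)]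
    push_cast; rfl
  · rw [← Complex.ofReal_add, Complex.Gamma_ofReal, Complex.Gamma_ofReal, Complex.Gamma_ofReal]
    push_cast
    rw [Complex.ofReal_cpow ht.le]
    push_cast; ring

end Real

open Real

theorem summable_mittagLeffler {β : ℝ} (hβ : 0 < β) (x : ℝ) :
    Summable fun k : ℕ => x ^ k / Gamma (β * k + 1) := by
  refine summable_of_ratio_norm_eventually_le one_half_lt_one ?_
  have hgrowth : Tendsto (fun k : ℕ => (β * k) ^ β) atTop atTop :=
    (tendsto_rpow_atTop hβ).comp (tendsto_natCast_atTop_atTop.const_mul_atTop hβ)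
  filter_upwards [eventually_ge_atTop 1, hgrowth.eventually_ge_atTop (2 * |x|)] with k hk hxk
  have hΓ : 2 * |x| * Gamma (β * k + 1) ≤ Gamma (β * ↑(k + 1) + 1) :=
    calc 2 * |x| * Gamma (β * k + 1) ≤ (β * k) ^ β * Gamma (β * k + 1) := by gcongr
      _ ≤ Gamma (β * k + 1 + β) :=
        rpow_mul_Gamma_add_one_le_Gamma_add (mul_pos hβ (by exact_mod_cast hk)) hβ
      _ = Gamma (β * ↑(k + 1) + 1) := by push_cast; ring_nf
  have hΓk : 0 < Gamma (β * k + 1) := Gamma_pos_of_pos (by positivity)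
  have hΓk' : 0 < Gamma (β * ↑(k + 1) + 1) := Gamma_pos_of_pos (by positivity)
  rw [norm_div, norm_div, norm_pow, norm_pow, norm_of_nonneg hΓk.le, norm_of_nonneg hΓk'.le,
    div_le_iff₀ hΓk', pow_succ, norm_eq_abs]
  calc |x| ^ k * |x| = 1 / 2 * (|x| ^ k / Gamma (β * k + 1)) * (2 * |x| * Gamma (β * k + 1)) := by
        field_simp
    _ ≤ 1 / 2 * (|x| ^ k / Gamma (β * k + 1)) * Gamma (β * ↑(k + 1) + 1) := by gcongr

theorem mittagLeffler_zero (β : ℝ) : mittagLeffler β 0 = 1 := by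
  rw [mittagLeffler, tsum_eq_single 0 fun k hk => by simp [hk]]
  simp

theorem hasSum_mittagLeffler_sub_one {β : ℝ} (hβ : 0 < β) (x : ℝ) :
    HasSum (fun k : ℕ => x ^ (k + 1) / Gamma (β * ↑(k + 1) + 1)) (mittagLeffler β x - 1) := by
  have h := (hasSum_nat_add_iff' 1).2 (summable_mittagLeffler hβ x).hasSum
  simpa [mittagLeffler] using h

theorem mul_rpow_pow {γ τ : ℝ} (hτ : 0 ≤ τ) (β : ℝ) (k : ℕ) :
    (γ * τ ^ β) ^ k = γ ^ k * τ ^ (β * k) := by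
  rw [mul_pow, ← rpow_natCast (τ ^ β), ← rpow_mul hτ]

theorem mul_integral_kernel_mittagLeffler_term {β t : ℝ} (hβ : 0 < β) (ht : 0 < t) (γ : ℝ)
    (k : ℕ) :
    γ / Gamma β * ∫ τ in (0:ℝ)..t, (t - τ) ^ (β - 1) * ((γ * τ ^ β) ^ k / Gamma (β * k + 1)) =
      (γ * t ^ β) ^ (k + 1) / Gamma (β * ↑(k + 1) + 1) := by
  have hkernel : ∀ τ ∈ uIcc 0 t, (t - τ) ^ (β - 1) * ((γ * τ ^ β) ^ k / Gamma (β * k + 1)) =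
      γ ^ k / Gamma (β * k + 1) * (τ ^ (β * k + 1 - 1) * (t - τ) ^ (β - 1)) := fun τ hτ => by
    rw [mul_rpow_pow (uIcc_of_le ht.le ▸ hτ).1, add_sub_cancel_right]
    ring
  rw [intervalIntegral.integral_congr hkernel, intervalIntegral.integral_const_mul,
    integral_rpow_mul_sub_rpow (by positivity) hβ ht, mul_rpow_pow ht.le]
  push_cast
  rw [show β * k + 1 + β - 1 = β * (k + 1) by ring, show β * k + 1 + β = β * (k + 1) + 1 by ring]
  field_simp [(Gamma_pos_of_pos hβ).ne', (Gamma_pos_of_pos (by positivity : 0 < β * k + 1)).ne']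
  ring

theorem mul_integral_kernel_mittagLeffler_eq_sub_one {β γ t : ℝ} (hβ : 0 < β) (hγ : 0 < γ)
    (ht : 0 < t) :
    γ / Gamma β * ∫ τ in (0:ℝ)..t, (t - τ) ^ (β - 1) * mittagLeffler β (γ * τ ^ β) =
      mittagLeffler β (γ * t ^ β) - 1 := by
  set F : ℕ → ℝ → ℝ := fun k τ => (t - τ) ^ (β - 1) * ((γ * τ ^ β) ^ k / Gamma (β * k + 1))
  have hF_integral : ∀ k, γ / Gamma β * ∫ τ in (0:ℝ)..t, F k τ =
      (γ * t ^ β) ^ (k + 1) / Gamma (β * ↑(k + 1) + 1) :=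
    mul_integral_kernel_mittagLeffler_term hβ ht γ
  have hF_nonneg : ∀ k, ∀ τ ∈ Ioc 0 t, 0 ≤ F k τ := fun k τ hτ => by
    have : 0 ≤ t - τ := sub_nonneg.2 hτ.2
    have : 0 ≤ τ := hτ.1.le
    positivity
  -- each term has a positive integral, hence is integrable
  have hF_int : ∀ k, IntegrableOn (F k) (Ioc 0 t) := fun k =>
    (intervalIntegrable_iff_integrableOn_Ioc_of_le ht.le).1 <|
      intervalIntegral.intervalIntegrable_of_integral_ne_zero <|
        right_ne_zero_of_mul <| (hF_integral k).trans_ne (by positivity)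
  have hsum : HasSum (fun k => γ / Gamma β * ∫ τ in Ioc 0 t, F k τ)
      (mittagLeffler β (γ * t ^ β) - 1) := by
    simpa only [← intervalIntegral.integral_of_le ht.le, hF_integral]
      using hasSum_mittagLeffler_sub_one hβ (γ * t ^ β)
  have hswap : ∫ τ in Ioc 0 t, ∑' k, F k τ = ∑' k, ∫ τ in Ioc 0 t, F k τ := by
    refine (integral_tsum_of_summable_integral_norm hF_int ?_).symm
    refine (hsum.summable.mul_left (Gamma β / γ)).congr fun k => ?_
    rw [setIntegral_congr_fun measurableSet_Ioc fun τ hτ => norm_of_nonneg (hF_nonneg k τ hτ)]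
    field_simp [(Gamma_pos_of_pos hβ).ne']
  simp only [mittagLeffler, ← tsum_mul_left, intervalIntegral.integral_of_le ht.le]
  rw [hswap, ← tsum_mul_left, hsum.tsum_eq]
  rfl

/-- For `α > 1/2`, `γ > 0` and `t ≥ 0`,
`(γ / Γ(2α − 1)) ∫_0^t (t − τ)^(2α−2) E_{2α−1}(γ τ^(2α−1)) dτ ≤ E_{2α−1}(γ t^(2α−1))`. -/
theorem mittagLeffler_kernel_integral_le (α γ : ℝ) (hα : 1 / 2 < α) (hγ : 0 < γ)
    (t : ℝ) (ht : 0 ≤ t) :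
    (γ / Real.Gamma (2 * α - 1)) *
        ∫ τ in (0:ℝ)..t,
          (t - τ) ^ (2 * α - 2) * mittagLeffler (2 * α - 1) (γ * τ ^ (2 * α - 1)) ≤
      mittagLeffler (2 * α - 1) (γ * t ^ (2 * α - 1)) := by
  have hβ : 0 < 2 * α - 1 := by linarith
  rw [show 2 * α - 2 = 2 * α - 1 - 1 by ring]
  rcases ht.eq_or_lt with rfl | ht
  · rw [intervalIntegral.integral_same, mul_zero, zero_rpow hβ.ne', mul_zero, mittagLeffler_zero]
    exact zero_le_one
  · rw [mul_integral_kernel_mittagLeffler_eq_sub_one hβ hγ ht]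
    exact sub_le_self _ zero_le_one
end

section
/- Let α ∈ (1/2, 1), T > 0, b ≥ 0, and let u : [0, T] → [0, ∞) be measurable and bounded, satisfying u(t) ≤ b ∫_0^t (t − τ)^{2α−2} u(τ) dτ for all t ∈ [0, T]. Then u(t) = 0 for all t ∈ [0, T]. -/
open MeasureTheory intervalIntegral Set

/-- Uniqueness-type Gronwall inequality with singular kernel: if `u : [0,T] → [0,∞)` is
measurable and bounded with `u(t) ≤ b ∫_0^t (t − τ)^(2α−2) u(τ) dτ` on `[0, T]`, then
`u ≡ 0` on `[0, T]`. -/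
theorem gronwall_singular_kernel_zero (α T b : ℝ) (hα : α ∈ Set.Ioo (1 / 2 : ℝ) 1)
    (hT : 0 < T) (hb : 0 ≤ b)
    (u : ℝ → ℝ) (hmeas : Measurable u)
    (hnonneg : ∀ t ∈ Set.Icc (0:ℝ) T, 0 ≤ u t)
    (hbdd : ∃ M : ℝ, ∀ t ∈ Set.Icc (0:ℝ) T, u t ≤ M)
    (hineq : ∀ t ∈ Set.Icc (0:ℝ) T,
      u t ≤ b * ∫ τ in (0:ℝ)..t, (t - τ) ^ (2 * α - 2) * u τ) :
    ∀ t ∈ Set.Icc (0:ℝ) T, u t = 0 := by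
  obtain ⟨hα1, hα2⟩ := hα
  have hγ : (-1:ℝ) < 2 * α - 2 := by linarith
  have hβ0 : (0:ℝ) < 2 * α - 1 := by linarith
  obtain ⟨M, hM⟩ := hbdd
  set M0 : ℝ := max M 0 with hM0def
  have hM00 : 0 ≤ M0 := le_max_right _ _
  have hM0 : ∀ t ∈ Set.Icc (0:ℝ) T, u t ≤ M0 := fun t ht => (hM t ht).trans (le_max_left _ _)
  -- choice of the small step δ
  set δ : ℝ := ((2 * α - 1) / (2 * (b + 1))) ^ (1 / (2 * α - 1)) with hδdef
  have hc0 : (0:ℝ) < (2 * α - 1) / (2 * (b + 1)) := by positivity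
  have hδ0 : 0 < δ := Real.rpow_pos_of_pos hc0 _
  have hδpow : δ ^ (2 * α - 1) = (2 * α - 1) / (2 * (b + 1)) := by
    rw [hδdef, ← Real.rpow_mul hc0.le, one_div, inv_mul_cancel₀ hβ0.ne', Real.rpow_one]
  have hδb : b * (δ ^ (2 * α - 1)) / (2 * α - 1) ≤ 1 / 2 := by
    rw [hδpow, div_le_div_iff₀ (by linarith) (by norm_num)]
    nlinarith [div_mul_cancel₀ (2 * α - 1) (show (2 * (b + 1)) ≠ 0 by positivity),
      hc0.le]
  -- kernel integrability
  have hker : ∀ a t : ℝ, IntervalIntegrable (fun τ => (t - τ) ^ (2 * α - 2)) volume a t := by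
    intro a t
    have h1 : IntervalIntegrable (fun x : ℝ => x ^ (2 * α - 2)) volume (t - a) (t - t) :=
      intervalIntegral.intervalIntegrable_rpow' hγ
    have h2 := h1.comp_sub_left t
    simpa using h2
  -- kernel nonneg on the relevant range
  have hkn : ∀ t τ : ℝ, τ ≤ t → 0 ≤ (t - τ) ^ (2 * α - 2) :=
    fun t τ h => Real.rpow_nonneg (by linarith) _
  -- integrability of the full integrand
  have hint : ∀ t, 0 ≤ t → t ≤ T →
      IntervalIntegrable (fun τ => (t - τ) ^ (2 * α - 2) * u τ) volume 0 t := by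
    intro t ht0 htT
    refine ((hker 0 t).const_mul M0).mono_fun ?_ ?_
    · exact (hker 0 t).def'.aestronglyMeasurable.mul hmeas.aestronglyMeasurable.restrict
    · filter_upwards [ae_restrict_mem measurableSet_uIoc] with τ hτ
      rw [uIoc_of_le ht0] at hτ
      have hτ0 : 0 ≤ τ := hτ.1.le
      have hτt : τ ≤ t := hτ.2
      have h1 : 0 ≤ (t - τ) ^ (2 * α - 2) := hkn t τ hτt
      have h2 : 0 ≤ u τ := hnonneg τ ⟨hτ0, hτt.trans htT⟩
      rw [Real.norm_eq_abs, abs_of_nonneg (mul_nonneg h1 h2)]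
      calc (t - τ) ^ (2 * α - 2) * u τ ≤ (t - τ) ^ (2 * α - 2) * M0 :=
            mul_le_mul_of_nonneg_left (hM0 τ ⟨hτ0, hτt.trans htT⟩) h1
        _ = M0 * (t - τ) ^ (2 * α - 2) := mul_comm _ _
        _ ≤ ‖M0 * (t - τ) ^ (2 * α - 2)‖ := le_abs_self _
  -- value of the kernel integral
  have hkval : ∀ a s : ℝ, a ≤ s →
      (∫ τ in a..s, (s - τ) ^ (2 * α - 2)) = (s - a) ^ (2 * α - 1) / (2 * α - 1) := by
    intro a s has
    rw [intervalIntegral.integral_comp_sub_left (fun x : ℝ => x ^ (2 * α - 2)) s, sub_self,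
      integral_rpow (Or.inl hγ), Real.zero_rpow (by linarith),
      show 2 * α - 2 + 1 = 2 * α - 1 by ring]
    ring
  -- main induction
  have main : ∀ n : ℕ, ∀ t ∈ Set.Icc (0:ℝ) T, t ≤ n * δ → u t = 0 := by
    intro n
    induction n with
    | zero =>
      intro t ht htn
      simp only [Nat.cast_zero, zero_mul] at htn
      have ht0 : t = 0 := le_antisymm htn ht.1
      subst ht0
      have := hineq 0 ht
      simp only [intervalIntegral.integral_same, mul_zero] at this
      exact le_antisymm this (hnonneg 0 ht)
    | succ n ih =>
      intro t ht htn
      by_cases hcase : t ≤ n * δ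
      · exact ih t ht hcase
      push_neg at hcase
      set a : ℝ := n * δ with hadef
      set b' : ℝ := min ((n + 1 : ℕ) * δ) T with hb'def
      have ha0 : 0 ≤ a := by positivity
      have hab' : a ≤ b' := le_min (by push_cast; nlinarith) (hcase.le.trans ht.2)
      have hb'T : b' ≤ T := min_le_right _ _
      have hsubIcc : Set.Icc a b' ⊆ Set.Icc (0:ℝ) T := Set.Icc_subset_Icc ha0 hb'T
      set S : ℝ := sSup (u '' Set.Icc a b') with hSdef
      have hne : (u '' Set.Icc a b').Nonempty := ⟨u a, a, ⟨le_refl a, hab'⟩, rfl⟩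
      have hbdd' : BddAbove (u '' Set.Icc a b') := by
        refine ⟨M0, ?_⟩
        rintro y ⟨x, hx, rfl⟩
        exact hM0 x (hsubIcc hx)
      have hle_S : ∀ s ∈ Set.Icc a b', u s ≤ S := fun s hs => le_csSup hbdd' ⟨s, hs, rfl⟩
      have hS0 : 0 ≤ S :=
        le_trans (hnonneg a (hsubIcc ⟨le_refl a, hab'⟩)) (hle_S a ⟨le_refl a, hab'⟩)
      have step : ∀ s ∈ Set.Icc a b', u s ≤ S / 2 := by
        intro s hs
        have hs0T : s ∈ Set.Icc (0:ℝ) T := hsubIcc hs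
        have has : a ≤ s := hs.1
        have h1 := hineq s hs0T
        have hints := hint s hs0T.1 hs0T.2
        have hi1 : IntervalIntegrable (fun τ => (s - τ) ^ (2 * α - 2) * u τ) volume 0 a :=
          hints.mono_set (by
            rw [Set.uIcc_of_le ha0, Set.uIcc_of_le hs0T.1]
            exact Set.Icc_subset_Icc le_rfl has)
        have hi2 : IntervalIntegrable (fun τ => (s - τ) ^ (2 * α - 2) * u τ) volume a s :=
          hints.mono_set (by
            rw [Set.uIcc_of_le has, Set.uIcc_of_le hs0T.1]
            exact Set.Icc_subset_Icc ha0 le_rfl)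
        have hsplit : (∫ τ in (0:ℝ)..s, (s - τ) ^ (2 * α - 2) * u τ)
            = (∫ τ in (0:ℝ)..a, (s - τ) ^ (2 * α - 2) * u τ)
              + ∫ τ in a..s, (s - τ) ^ (2 * α - 2) * u τ :=
          (intervalIntegral.integral_add_adjacent_intervals hi1 hi2).symm
        have hI0 : (∫ τ in (0:ℝ)..a, (s - τ) ^ (2 * α - 2) * u τ) = 0 := by
          rw [intervalIntegral.integral_congr (g := fun _ => (0:ℝ)) ?_]
          · simp
          · intro τ hτ
            rw [Set.uIcc_of_le ha0] at hτ
            have : u τ = 0 := ih τ ⟨hτ.1, hτ.2.trans (has.trans hs0T.2)⟩ hτ.2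
            simp [this]
        have hmono : (∫ τ in a..s, (s - τ) ^ (2 * α - 2) * u τ)
            ≤ ∫ τ in a..s, (s - τ) ^ (2 * α - 2) * S := by
          apply intervalIntegral.integral_mono_on has hi2 ((hker a s).mul_const S)
          intro τ hτ
          exact mul_le_mul_of_nonneg_left (hle_S τ ⟨hτ.1, hτ.2.trans hs.2⟩) (hkn s τ hτ.2)
        have hval : (∫ τ in a..s, (s - τ) ^ (2 * α - 2) * S)
            = (s - a) ^ (2 * α - 1) / (2 * α - 1) * S := by
          rw [intervalIntegral.integral_mul_const, hkval a s has]
        have hsδ : s ≤ (n + 1) * δ := by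
          have := hs.2.trans (min_le_left _ _)
          push_cast at this
          linarith
        have hsa : s - a ≤ δ := by rw [hadef]; linarith
        have hpow : (s - a) ^ (2 * α - 1) ≤ δ ^ (2 * α - 1) :=
          Real.rpow_le_rpow (by linarith) hsa hβ0.le
        have h2 : u s ≤ b * ((s - a) ^ (2 * α - 1) / (2 * α - 1) * S) := by
          calc u s ≤ b * ∫ τ in (0:ℝ)..s, (s - τ) ^ (2 * α - 2) * u τ := h1
            _ = b * ((0:ℝ) + ∫ τ in a..s, (s - τ) ^ (2 * α - 2) * u τ) := by
                rw [hsplit, hI0]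
            _ ≤ b * ((s - a) ^ (2 * α - 1) / (2 * α - 1) * S) := by
                rw [zero_add]
                exact mul_le_mul_of_nonneg_left (hmono.trans_eq hval) hb
        have hms : b * (s - a) ^ (2 * α - 1) ≤ b * δ ^ (2 * α - 1) :=
          mul_le_mul_of_nonneg_left hpow hb
        have h3 : b * ((s - a) ^ (2 * α - 1) / (2 * α - 1) * S)
            ≤ b * δ ^ (2 * α - 1) / (2 * α - 1) * S := by
          rw [show b * ((s - a) ^ (2 * α - 1) / (2 * α - 1) * S)
              = b * (s - a) ^ (2 * α - 1) * (S / (2 * α - 1)) by ring,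
            show b * δ ^ (2 * α - 1) / (2 * α - 1) * S
              = b * δ ^ (2 * α - 1) * (S / (2 * α - 1)) by ring]
          exact mul_le_mul_of_nonneg_right hms (by positivity)
        have h4 : b * δ ^ (2 * α - 1) / (2 * α - 1) * S ≤ 1 / 2 * S :=
          mul_le_mul_of_nonneg_right hδb hS0
        linarith
      have hS2 : S ≤ S / 2 := by
        apply csSup_le hne
        rintro y ⟨x, hx, rfl⟩
        exact step x hx
      have htmem : t ∈ Set.Icc a b' :=
        ⟨hcase.le, le_min (by exact_mod_cast htn) ht.2⟩
      have : u t ≤ 0 := (hle_S t htmem).trans (by linarith)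
      exact le_antisymm this (hnonneg t ht)
  obtain ⟨n, hn⟩ := exists_nat_ge (T / δ)
  intro t ht
  refine main n t ht ?_
  have := (div_le_iff₀ hδ0).mp hn
  linarith [ht.2]
end

section
/- Let α ∈ (1/2, 1) and λ > 2α/(1 − α). Let f : [0, ∞) → [0, ∞) be measurable and bounded, and suppose there exist constants K > 0 and T > 0 such that f(τ) ≤ K τ^{−2λ} for all τ ≥ T. Then ∫_0^t (t − τ)^{2α−2} f(τ) dτ → 0 as t → ∞. -/
/-!
With `a = 2α - 2 ∈ (-1, 0)` and `b = 2l > a + 1`, split `[0, t]` at `t / 2`. For `τ ≤ t/2` the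
kernel is at most `(t/2)^a`, which contributes `(t/2)^a ‖f‖_{L¹(0,∞)}`. For `τ > t/2` the decay
gives `|f(τ)| ≤ C (t/2)^(-b)`, and the kernel integrates to at most `t^(a+1)/(a+1)`, which
contributes `O(t^(a+1-b))`. Both tend to `0`.
-/

open MeasureTheory Real Set Filter Asymptotics Topology intervalIntegral

theorem integral_rpow_sub_left {a : ℝ} (ha : -1 < a) (s t : ℝ) :
    ∫ τ in s..t, (t - τ) ^ a = (t - s) ^ (a + 1) / (a + 1) := by
  rw [integral_comp_sub_left (fun x => x ^ a), sub_self,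
    integral_rpow (Or.inl ha), zero_rpow (by linarith), sub_zero]

theorem intervalIntegrable_rpow_sub_left {a : ℝ} (ha : -1 < a) (t u v : ℝ) :
    IntervalIntegrable (fun τ => (t - τ) ^ a) volume u v := by
  simpa using (intervalIntegrable_rpow' (a := t - u) (b := t - v) ha).comp_sub_left t

theorem norm_integral_rpow_sub_mul_le {a s t C : ℝ} {f : ℝ → ℝ} (ha : -1 < a) (ha0 : a ≤ 0)
    (ht : 0 ≤ t) (hst : s < t) (hf : IntegrableOn f (Ioi 0)) (hC : ∀ τ ∈ Ioc s t, ‖f τ‖ ≤ C) :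
    ‖∫ τ in 0..t, (t - τ) ^ a * f τ‖ ≤
      (t - s) ^ a * (∫ τ in Ioi 0, ‖f τ‖) + C * (t ^ (a + 1) / (a + 1)) := by
  have hC0 : 0 ≤ C := (norm_nonneg _).trans (hC t ⟨hst, le_rfl⟩)
  have hfint : IntervalIntegrable (fun τ => ‖f τ‖) volume 0 t :=
    (intervalIntegrable_iff_integrableOn_Ioc_of_le ht).2
      (IntegrableOn.mono_set hf.norm Ioc_subset_Ioi_self)
  have hkint := (intervalIntegrable_rpow_sub_left ha t 0 t).const_mul C
  calc ‖∫ τ in 0..t, (t - τ) ^ a * f τ‖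
      ≤ ∫ τ in 0..t, ((t - s) ^ a * ‖f τ‖ + C * (t - τ) ^ a) := by
        refine norm_integral_le_of_norm_le ht (ae_of_all _ fun τ hτ => ?_)
          ((hfint.const_mul _).add hkint)
        have hk : 0 ≤ (t - τ) ^ a := rpow_nonneg (by linarith [hτ.2]) a
        rw [norm_mul, norm_of_nonneg hk]
        rcases le_or_gt τ s with hτs | hτs
        · have : (t - τ) ^ a ≤ (t - s) ^ a :=
            rpow_le_rpow_of_nonpos (by linarith) (by linarith) ha0
          nlinarith [norm_nonneg (f τ), mul_nonneg hC0 hk]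
        · nlinarith [hC τ ⟨hτs, hτ.2⟩, norm_nonneg (f τ), rpow_nonneg (sub_nonneg.2 hst.le) a]
    _ = (t - s) ^ a * (∫ τ in Ioc 0 t, ‖f τ‖) + C * (t ^ (a + 1) / (a + 1)) := by
        rw [integral_add (hfint.const_mul _) hkint, intervalIntegral.integral_const_mul,
          intervalIntegral.integral_const_mul,
          integral_rpow_sub_left ha, sub_zero, integral_of_le ht]
    _ ≤ (t - s) ^ a * (∫ τ in Ioi 0, ‖f τ‖) + C * (t ^ (a + 1) / (a + 1)) := by
        refine add_le_add_left (mul_le_mul_of_nonneg_left ?_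
          (rpow_nonneg (sub_nonneg.2 hst.le) a)) _
        exact setIntegral_mono_set hf.norm (ae_of_all _ fun _ => norm_nonneg _)
          (ae_of_all _ Ioc_subset_Ioi_self)

theorem tendsto_integral_rpow_sub_mul_atTop {a b : ℝ} {f : ℝ → ℝ} (ha : -1 < a) (ha0 : a < 0)
    (hab : a + 1 < b) (hf : IntegrableOn f (Ioi 0)) (hO : f =O[atTop] fun τ => τ ^ (-b)) :
    Tendsto (fun t => ∫ τ in 0..t, (t - τ) ^ a * f τ) atTop (𝓝 0) := by
  obtain ⟨C, hC0, hC⟩ := hO.exists_pos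
  obtain ⟨T, hT⟩ := eventually_atTop.1 (hC.bound.and (eventually_gt_atTop 0))
  set I := ∫ τ in Ioi 0, ‖f τ‖
  have hpow : ∀ p : ℝ, p < 0 → Tendsto (fun u : ℝ => u ^ p) atTop (𝓝 0) := fun p hp => by
    simpa using tendsto_rpow_neg_atTop (neg_pos.2 hp)
  have hlim : Tendsto (fun u => u ^ a * I + C * 2 ^ (a + 1) / (a + 1) * u ^ (a + 1 - b))
      atTop (𝓝 0) := by
    simpa using ((hpow a ha0).mul_const I).add
      ((hpow _ (by linarith)).const_mul (C * 2 ^ (a + 1) / (a + 1)))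
  refine squeeze_zero_norm' ?_ (hlim.comp (tendsto_id.atTop_div_const two_pos))
  filter_upwards [eventually_ge_atTop (2 * T), eventually_gt_atTop 0] with t hTt ht
  have ht2 : 0 < t / 2 := half_pos ht
  have hfC : ∀ τ ∈ Ioc (t / 2) t, ‖f τ‖ ≤ C * (t / 2) ^ (-b) := by
    intro τ hτ
    obtain ⟨hτC, hτ0⟩ := hT τ (by linarith [hτ.1])
    calc ‖f τ‖ ≤ C * ‖τ ^ (-b)‖ := hτC
      _ = C * τ ^ (-b) := by rw [norm_of_nonneg (rpow_nonneg hτ0.le _)]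
      _ ≤ C * (t / 2) ^ (-b) :=
        mul_le_mul_of_nonneg_left (rpow_le_rpow_of_nonpos ht2 hτ.1.le (by linarith)) hC0.le
  refine (norm_integral_rpow_sub_mul_le ha ha0.le ht.le (half_lt_self ht) hf hfC).trans_eq ?_
  have hsplit : t ^ (a + 1) = 2 ^ (a + 1) * (t / 2) ^ (a + 1) := by
    rw [← mul_rpow zero_le_two ht2.le, mul_div_cancel₀ t two_ne_zero]
  simp only [Function.comp_apply, id, sub_half, hsplit, sub_eq_add_neg (a + 1),
    rpow_add ht2]
  ring

theorem integrableOn_Ioi_of_norm_le_of_isBigO_rpow {E : Type*} [NormedAddCommGroup E]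
    {f : ℝ → E} {b M : ℝ} (hb : 1 < b) (hf : AEStronglyMeasurable f)
    (hM : ∀ x, 0 ≤ x → ‖f x‖ ≤ M) (hO : f =O[atTop] fun x => x ^ (-b)) :
    IntegrableOn f (Ioi 0) := by
  have hloc : LocallyIntegrableOn f (Ici 0) :=
    (locallyIntegrableOn_iff isClosed_Ici.isLocallyClosed).2 fun k hk hkc =>
      Measure.integrableOn_of_bounded hkc.measure_lt_top.ne hf
        ((ae_restrict_mem hkc.measurableSet).mono fun x hx => hM x (hk hx))
  exact (hloc.integrableOn_of_isBigO_atTop hO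
    (integrableAtFilter_rpow_atTop_iff.2 (by linarith))).mono_set Ioi_subset_Ici_self

theorem kernel_integral_tendsto_zero_general (α l : ℝ) (hα : α ∈ Set.Ioo (1 / 2 : ℝ) 1)
    (hl : 2 * α / (1 - α) < l)
    (f : ℝ → ℝ) (hmeas : Measurable f)
    (hnonneg : ∀ τ : ℝ, 0 ≤ τ → 0 ≤ f τ)
    (hbdd : ∃ M : ℝ, ∀ τ : ℝ, 0 ≤ τ → f τ ≤ M)
    (K T : ℝ)
    (hdecay : ∀ τ : ℝ, T ≤ τ → f τ ≤ K * τ ^ (-(2 * l))) :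
    Filter.Tendsto (fun t : ℝ => ∫ τ in (0:ℝ)..t, (t - τ) ^ (2 * α - 2) * f τ)
      Filter.atTop (nhds 0) := by
  obtain ⟨hα₁, hα₂⟩ := hα
  obtain ⟨M, hM⟩ := hbdd
  have hl₁ : 1 < l := lt_trans ((lt_div_iff₀ (by linarith)).2 (by linarith)) hl
  have hO : f =O[atTop] fun τ => τ ^ (-(2 * l)) := by
    refine IsBigO.of_bound K ?_
    filter_upwards [eventually_ge_atTop T, eventually_ge_atTop 0] with τ hτT hτ
    rw [norm_of_nonneg (hnonneg τ hτ), norm_of_nonneg (rpow_nonneg hτ _)]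
    exact hdecay τ hτT
  have hf : IntegrableOn f (Ioi 0) :=
    integrableOn_Ioi_of_norm_le_of_isBigO_rpow (by linarith) hmeas.aestronglyMeasurable
      (fun τ hτ => (norm_of_nonneg (hnonneg τ hτ)).trans_le (hM τ hτ)) hO
  exact tendsto_integral_rpow_sub_mul_atTop (by linarith) (by linarith) (by linarith) hf hO

/-- If `f : [0,∞) → [0,∞)` is measurable, bounded, and `f(τ) ≤ K τ^(−2l)` for `τ ≥ T`
with `l > 2α/(1−α)`, then `∫_0^t (t − τ)^(2α−2) f(τ) dτ → 0` as `t → ∞`. -/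
theorem kernel_integral_tendsto_zero (α l : ℝ) (hα : α ∈ Set.Ioo (1 / 2 : ℝ) 1)
    (hl : 2 * α / (1 - α) < l)
    (f : ℝ → ℝ) (hmeas : Measurable f)
    (hnonneg : ∀ τ : ℝ, 0 ≤ τ → 0 ≤ f τ)
    (hbdd : ∃ M : ℝ, ∀ τ : ℝ, 0 ≤ τ → f τ ≤ M)
    (K T : ℝ) (hK : 0 < K) (hT : 0 < T)
    (hdecay : ∀ τ : ℝ, T ≤ τ → f τ ≤ K * τ ^ (-(2 * l))) :
    Filter.Tendsto (fun t : ℝ => ∫ τ in (0:ℝ)..t, (t - τ) ^ (2 * α - 2) * f τ)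
      Filter.atTop (nhds 0) :=
  kernel_integral_tendsto_zero_general α l hα hl f hmeas hnonneg hbdd K T hdecay
end

section
/- Let α ∈ (1/2, 1) and λ > 2α/(1 − α). Let g : [0, ∞) → [0, ∞) be measurable and bounded, and suppose there exist constants K > 0 and T > 0 such that g(τ)^2 ≤ K τ^{−2λ} for all τ ≥ T. Then ∫_0^t (t − τ)^{α−1} g(τ) dτ → 0 as t → ∞. -/
/-!
Split the kernel at `t / 2`. For `τ ≤ t / 2` the kernel is at most `(t / 2) ^ (α - 1)`, so this
part is bounded by `(t / 2) ^ (α - 1) ∫₀^∞ |g|`, which is finite because the decay rate `l`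
exceeds `1`. For `τ > t / 2` we have `|g τ| ≤ C (t / 2) ^ (-l)`, while the kernel integrates to
`t ^ α / α`, so this part is `O(t ^ (α - l))`. Both bounds tend to zero as `α < 1 < l`.
-/

open MeasureTheory Set Filter Asymptotics Topology

section

variable {α l : ℝ} {g : ℝ → ℝ}

lemma intervalIntegrable_sub_rpow_sub_one (hα : 0 < α) (t : ℝ) :
    IntervalIntegrable (fun τ => (t - τ) ^ (α - 1)) volume 0 t := by
  simpa using
    (intervalIntegral.intervalIntegrable_rpow' (a := t) (b := 0) (by linarith)).comp_sub_left t

lemma integral_sub_rpow_sub_one (hα : 0 < α) (t : ℝ) :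
    ∫ τ in (0 : ℝ)..t, (t - τ) ^ (α - 1) = t ^ α / α := by
  rw [intervalIntegral.integral_comp_sub_left (fun x => x ^ (α - 1)) t, sub_self, sub_zero,
    integral_rpow (Or.inl (by linarith)), sub_add_cancel, Real.zero_rpow hα.ne', sub_zero]

lemma norm_sub_rpow_mul_le (hα : α ≤ 1) {s t τ D : ℝ} (hst : s < t)
    (hD : ∀ τ > s, ‖g τ‖ ≤ D) (hτ : τ ≤ t) :
    ‖(t - τ) ^ (α - 1) * g τ‖ ≤ (t - s) ^ (α - 1) * ‖g τ‖ + D * (t - τ) ^ (α - 1) := by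
  have hk : 0 ≤ (t - τ) ^ (α - 1) := Real.rpow_nonneg (by linarith) _
  have hD0 : 0 ≤ D := (norm_nonneg _).trans (hD (s + 1) (by linarith))
  rw [norm_mul, Real.norm_of_nonneg hk]
  rcases le_or_gt τ s with hτs | hsτ
  · have hks : (t - τ) ^ (α - 1) ≤ (t - s) ^ (α - 1) :=
      Real.rpow_le_rpow_of_nonpos (by linarith) (by linarith) (by linarith)
    calc (t - τ) ^ (α - 1) * ‖g τ‖ ≤ (t - s) ^ (α - 1) * ‖g τ‖ :=
          mul_le_mul_of_nonneg_right hks (norm_nonneg _)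
      _ ≤ _ := le_add_of_nonneg_right (mul_nonneg hD0 hk)
  · calc (t - τ) ^ (α - 1) * ‖g τ‖ ≤ D * (t - τ) ^ (α - 1) := by
          rw [mul_comm D]; exact mul_le_mul_of_nonneg_left (hD τ hsτ) hk
      _ ≤ _ := le_add_of_nonneg_left (mul_nonneg (Real.rpow_nonneg (by linarith) _) (norm_nonneg _))

lemma norm_integral_sub_rpow_mul_le (hα : 0 < α) (hα1 : α ≤ 1) {s t D : ℝ}
    (hs : 0 ≤ s) (hst : s < t) (hg : IntegrableOn g (Ioc 0 t)) (hD : ∀ τ > s, ‖g τ‖ ≤ D) :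
    ‖∫ τ in (0 : ℝ)..t, (t - τ) ^ (α - 1) * g τ‖ ≤
      (t - s) ^ (α - 1) * (∫ τ in (0 : ℝ)..t, ‖g τ‖) + D * (t ^ α / α) := by
  have ht : 0 ≤ t := by linarith
  have hgi : IntervalIntegrable (fun τ => ‖g τ‖) volume 0 t :=
    (intervalIntegrable_iff_integrableOn_Ioc_of_le ht).2 hg.norm
  have hk := intervalIntegrable_sub_rpow_sub_one hα t
  calc _ ≤ ∫ τ in (0 : ℝ)..t, ((t - s) ^ (α - 1) * ‖g τ‖ + D * (t - τ) ^ (α - 1)) :=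
        intervalIntegral.norm_integral_le_of_norm_le ht
          (ae_of_all _ fun τ hτ => norm_sub_rpow_mul_le hα1 hst hD hτ.2)
          ((hgi.const_mul _).add (hk.const_mul _))
    _ = _ := by
        rw [intervalIntegral.integral_add (hgi.const_mul _) (hk.const_mul _),
          intervalIntegral.integral_const_mul, intervalIntegral.integral_const_mul,
          integral_sub_rpow_sub_one hα]

lemma isBigO_rpow_neg_of_sq_le {K T : ℝ}
    (h : ∀ τ, T ≤ τ → g τ ^ 2 ≤ K * τ ^ (-(2 * l))) : g =O[atTop] fun τ => τ ^ (-l) := by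
  refine IsBigO.of_pow two_ne_zero (IsBigO.of_bound K ?_)
  filter_upwards [eventually_ge_atTop T, eventually_gt_atTop 0] with τ hτT hτ
  have hsq : (τ ^ (-l)) ^ 2 = τ ^ (-(2 * l)) := by
    rw [← Real.rpow_natCast, ← Real.rpow_mul hτ.le]
    ring_nf
  rw [Pi.pow_apply, Pi.pow_apply, norm_pow, norm_pow, Real.norm_eq_abs, Real.norm_eq_abs, sq_abs,
    sq_abs, hsq]
  exact h τ hτT

lemma integrableOn_Ici_of_isBigO_rpow {a M : ℝ} (hmeas : AEStronglyMeasurable g)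
    (hM : ∀ τ, a ≤ τ → ‖g τ‖ ≤ M) (hl : 1 < l) (hdecay : g =O[atTop] fun τ => τ ^ (-l)) :
    IntegrableOn g (Ici a) := by
  refine LocallyIntegrableOn.integrableOn_of_isBigO_atTop ?_ hdecay
    (integrableAtFilter_rpow_atTop_iff.2 (by linarith))
  refine (locallyIntegrableOn_iff isClosed_Ici.isLocallyClosed).2 fun k hk hkc => ?_
  exact IntegrableOn.of_bound hkc.measure_lt_top hmeas.restrict M
    ((ae_restrict_iff' hkc.measurableSet).2 (ae_of_all _ fun τ hτ => hM τ (hk hτ)))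

lemma tendsto_integral_sub_rpow_mul_of_isBigO (hα : 0 < α) (hα1 : α < 1) (hαl : α < l)
    (hg : IntegrableOn g (Ioi 0)) (hdecay : g =O[atTop] fun τ => τ ^ (-l)) :
    Tendsto (fun t => ∫ τ in (0 : ℝ)..t, (t - τ) ^ (α - 1) * g τ) atTop (𝓝 0) := by
  obtain ⟨C, hC0, hC⟩ := hdecay.exists_nonneg
  obtain ⟨T, hT⟩ := eventually_atTop.1 (hC.bound.and (eventually_gt_atTop 0))
  set I := ∫ τ in Ioi 0, ‖g τ‖
  have hbound : ∀ᶠ t in atTop, ‖∫ τ in (0 : ℝ)..t, (t - τ) ^ (α - 1) * g τ‖ ≤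
      (t / 2) ^ (α - 1) * I + C * (t / 2) ^ (-l) * (t ^ α / α) := by
    filter_upwards [eventually_ge_atTop (2 * T)] with t ht
    have hs : 0 < t / 2 := (hT T le_rfl).2.trans_le (by linarith)
    have htail : ∀ τ > t / 2, ‖g τ‖ ≤ C * (t / 2) ^ (-l) := fun τ hτ => by
      obtain ⟨hgτ, hτ0⟩ := hT τ (by linarith)
      rw [Real.norm_of_nonneg (Real.rpow_nonneg hτ0.le _)] at hgτ
      exact hgτ.trans (mul_le_mul_of_nonneg_left
        (Real.rpow_le_rpow_of_nonpos hs hτ.le (by linarith)) hC0)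
    have hnorm : ∫ τ in (0 : ℝ)..t, ‖g τ‖ ≤ I := by
      rw [intervalIntegral.integral_of_le (by linarith)]
      exact setIntegral_mono_set hg.norm (ae_of_all _ fun _ => norm_nonneg _)
        (Ioc_subset_Ioi_self.eventuallyLE)
    have hsplit := norm_integral_sub_rpow_mul_le hα hα1.le hs.le (half_lt_self (by linarith))
      (hg.mono_set Ioc_subset_Ioi_self) htail
    rw [show t - t / 2 = t / 2 by ring] at hsplit
    exact hsplit.trans (by gcongr)
  have hlim : Tendsto (fun t => (t / 2) ^ (α - 1) * I + C * (t / 2) ^ (-l) * (t ^ α / α))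
      atTop (𝓝 0) := by
    have hhalf : Tendsto (fun t : ℝ => t / 2) atTop atTop := tendsto_id.atTop_div_const two_pos
    have hrpow : ∀ {r : ℝ}, r < 0 → Tendsto (fun t : ℝ => (t / 2) ^ r) atTop (𝓝 0) := fun hr => by
      simpa [Function.comp_def] using (tendsto_rpow_neg_atTop (neg_pos.2 hr)).comp hhalf
    have hsecond : (fun t => C * 2 ^ α / α * (t / 2) ^ (α - l)) =ᶠ[atTop]
        fun t => C * (t / 2) ^ (-l) * (t ^ α / α) := by
      filter_upwards [eventually_gt_atTop 0] with t ht
      have ht2 : 0 < t / 2 := by positivity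
      have htα : t ^ α = 2 ^ α * (t / 2) ^ α := by
        rw [← Real.mul_rpow two_pos.le ht2.le, mul_div_cancel₀ t two_ne_zero]
      rw [show α - l = -l + α by ring, Real.rpow_add ht2, htα]
      ring
    simpa using ((hrpow (by linarith)).mul_const I).add
      (((hrpow (by linarith)).const_mul (C * 2 ^ α / α)).congr' hsecond)
  exact squeeze_zero_norm' hbound hlim

end

theorem drift_integral_tendsto_zero_general (α l : ℝ) (hα : α ∈ Set.Ioo (1 / 2 : ℝ) 1)
    (hl : 2 * α / (1 - α) < l)
    (g : ℝ → ℝ) (hmeas : Measurable g)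
    (hnonneg : ∀ τ : ℝ, 0 ≤ τ → 0 ≤ g τ)
    (hbdd : ∃ M : ℝ, ∀ τ : ℝ, 0 ≤ τ → g τ ≤ M)
    (K T : ℝ)
    (hdecay : ∀ τ : ℝ, T ≤ τ → g τ ^ 2 ≤ K * τ ^ (-(2 * l))) :
    Filter.Tendsto (fun t : ℝ => ∫ τ in (0:ℝ)..t, (t - τ) ^ (α - 1) * g τ)
      Filter.atTop (nhds 0) := by
  obtain ⟨hα0, hα1⟩ := hα
  have hl1 : 1 < l := (one_lt_div (by linarith)).2 (by linarith) |>.trans hl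
  obtain ⟨M, hM⟩ := hbdd
  have hbigO := isBigO_rpow_neg_of_sq_le hdecay
  have hint : IntegrableOn g (Ici 0) :=
    integrableOn_Ici_of_isBigO_rpow hmeas.aestronglyMeasurable
      (fun τ hτ => (Real.norm_of_nonneg (hnonneg τ hτ)).trans_le (hM τ hτ)) hl1 hbigO
  exact tendsto_integral_sub_rpow_mul_of_isBigO (by linarith) hα1 (by linarith)
    (hint.mono_set Ioi_subset_Ici_self) hbigO

/-- If `g : [0,∞) → [0,∞)` is measurable, bounded, and `g(τ)² ≤ K τ^(−2l)` for `τ ≥ T`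
with `l > 2α/(1−α)`, then `∫_0^t (t − τ)^(α−1) g(τ) dτ → 0` as `t → ∞`. -/
theorem drift_integral_tendsto_zero (α l : ℝ) (hα : α ∈ Set.Ioo (1 / 2 : ℝ) 1)
    (hl : 2 * α / (1 - α) < l)
    (g : ℝ → ℝ) (hmeas : Measurable g)
    (hnonneg : ∀ τ : ℝ, 0 ≤ τ → 0 ≤ g τ)
    (hbdd : ∃ M : ℝ, ∀ τ : ℝ, 0 ≤ τ → g τ ≤ M)
    (K T : ℝ) (hK : 0 < K) (hT : 0 < T)
    (hdecay : ∀ τ : ℝ, T ≤ τ → g τ ^ 2 ≤ K * τ ^ (-(2 * l))) :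
    Filter.Tendsto (fun t : ℝ => ∫ τ in (0:ℝ)..t, (t - τ) ^ (α - 1) * g τ)
      Filter.atTop (nhds 0) :=
  drift_integral_tendsto_zero_general α l hα hl g hmeas hnonneg hbdd K T hdecay
end

section
/- Let α ∈ (1/2, 1), λ > 2α/(1 − α), and C > 0. Let u : [0, ∞) → [0, ∞) be measurable and bounded, and suppose there exist constants K > 0 and T > 0 such that u(τ) ≤ K τ^{−2λ} for all τ ≥ T. If a constant c ≥ 0 satisfies c ≤ 3 u(t) + C (∫_0^t (t − τ)^{α−1} √(u(τ)) dτ)^2 + C ∫_0^t (t − τ)^{2α−2} u(τ) dτ for all t > 0, then c = 0. -/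
/-!
The right-hand side of the inequality tends to `0` as `t → ∞`, so `c ≤ 0`.
The decay hypothesis makes `u` and `√u` integrable on `[0, ∞)` with `u = O(τ^(-2l))` and
`√u = O(τ^(-l))`. For a kernel exponent `β ∈ (-1, 0)` and `v` integrable with `v = O(τ^(-m))`,
`m > β + 1`, split `∫₀ᵗ (t - τ)^β v(τ) dτ` at `t / 2`: on `[0, t/2]` the kernel is at most
`(t/2)^β`, giving `(t/2)^β ‖v‖₁`; on `[t/2, t]` the function is `O(t^(-m))` and the kernel
integrates to `O(t^(β+1))`. Apply this with `β = α - 1` to `√u` and with `β = 2α - 2` to `u`.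
-/

open MeasureTheory Filter Asymptotics Set Topology

theorem integral_rpow_sub {β : ℝ} (hβ : -1 < β) (t : ℝ) :
    ∫ τ in (0 : ℝ)..t, (t - τ) ^ β = t ^ (β + 1) / (β + 1) := by
  rw [intervalIntegral.integral_comp_sub_left (fun x => x ^ β), sub_zero, sub_self,
    integral_rpow (Or.inl hβ), Real.zero_rpow (by linarith), sub_zero]

theorem intervalIntegrable_rpow_sub {β : ℝ} (hβ : -1 < β) (t : ℝ) :
    IntervalIntegrable (fun τ => (t - τ) ^ β) volume 0 t := by
  simpa using
    ((intervalIntegral.intervalIntegrable_rpow' hβ (a := 0) (b := t)).comp_sub_left t).symm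

theorem norm_integral_rpow_sub_mul_le_s10 {β D t : ℝ} (hβ : -1 < β) (hβ₀ : β ≤ 0) (ht : 0 < t)
    {v : ℝ → ℝ} (hv : IntervalIntegrable v volume 0 t) (hD : ∀ τ ∈ Icc (t / 2) t, ‖v τ‖ ≤ D) :
    ‖∫ τ in (0 : ℝ)..t, (t - τ) ^ β * v τ‖ ≤
      (t / 2) ^ β * (∫ τ in (0 : ℝ)..t, ‖v τ‖) + D * (t ^ (β + 1) / (β + 1)) := by
  have hD₀ : 0 ≤ D := (norm_nonneg _).trans (hD (t / 2) ⟨le_rfl, by linarith⟩)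
  have hpointwise : ∀ τ ∈ Ioc 0 t,
      ‖(t - τ) ^ β * v τ‖ ≤ (t / 2) ^ β * ‖v τ‖ + D * (t - τ) ^ β := by
    intro τ ⟨_, hτt⟩
    have hker : 0 ≤ (t - τ) ^ β := Real.rpow_nonneg (by linarith) β
    rw [norm_mul, Real.norm_of_nonneg hker]
    rcases le_or_gt τ (t / 2) with hτ | hτ
    · have : (t - τ) ^ β ≤ (t / 2) ^ β :=
        Real.rpow_le_rpow_of_nonpos (by linarith) (by linarith) hβ₀
      nlinarith [norm_nonneg (v τ)]
    · have : ‖v τ‖ ≤ D := hD τ ⟨hτ.le, hτt⟩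
      nlinarith [norm_nonneg (v τ), Real.rpow_nonneg (by linarith : (0 : ℝ) ≤ t / 2) β]
  have hker_int := (intervalIntegrable_rpow_sub hβ t).const_mul D
  have hbound_int := (hv.norm.const_mul ((t / 2) ^ β)).add hker_int
  calc ‖∫ τ in (0 : ℝ)..t, (t - τ) ^ β * v τ‖
      ≤ ∫ τ in (0 : ℝ)..t, ‖(t - τ) ^ β * v τ‖ :=
        intervalIntegral.norm_integral_le_integral_norm ht.le
    _ ≤ ∫ τ in (0 : ℝ)..t, ((t / 2) ^ β * ‖v τ‖ + D * (t - τ) ^ β) := by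
      simp only [intervalIntegral.integral_of_le ht.le]
      exact integral_mono_of_nonneg (.of_forall fun _ => norm_nonneg _) hbound_int.1
        ((ae_restrict_iff' measurableSet_Ioc).2 (.of_forall hpointwise))
    _ = (t / 2) ^ β * (∫ τ in (0 : ℝ)..t, ‖v τ‖) + D * (t ^ (β + 1) / (β + 1)) := by
      rw [intervalIntegral.integral_add (hv.norm.const_mul _) hker_int,
        intervalIntegral.integral_const_mul, intervalIntegral.integral_const_mul,
        integral_rpow_sub hβ]

theorem tendsto_div_two_rpow_atTop {β : ℝ} (hβ : β < 0) :
    Tendsto (fun t : ℝ => (t / 2) ^ β) atTop (𝓝 0) := by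
  simpa [Function.comp_def] using
    (tendsto_rpow_neg_atTop (neg_pos.2 hβ)).comp (tendsto_id.atTop_div_const two_pos)

theorem tendsto_integral_rpow_sub_mul_atTop_s10 {β m : ℝ} (hβ : -1 < β) (hβ₀ : β < 0)
    (hm : β + 1 < m) {v : ℝ → ℝ} (hv : IntegrableOn v (Ici 0))
    (hvO : v =O[atTop] fun τ => τ ^ (-m)) :
    Tendsto (fun t => ∫ τ in (0 : ℝ)..t, (t - τ) ^ β * v τ) atTop (𝓝 0) := by
  obtain ⟨c, hc, hcv⟩ := hvO.exists_pos
  obtain ⟨T, hT⟩ := eventually_atTop.1 hcv.bound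
  set I := ∫ τ in Ici 0, ‖v τ‖
  have hnear : Tendsto (fun t : ℝ => (t / 2) ^ (-m) * t ^ (β + 1)) atTop (𝓝 0) := by
    refine ((tendsto_rpow_neg_atTop (by linarith : 0 < m - (β + 1))).const_mul (2 ^ m)).congr'
      ?_ |>.trans (by simp)
    filter_upwards [eventually_gt_atTop 0] with t ht
    rw [Real.div_rpow ht.le two_pos.le, Real.rpow_neg two_pos.le, div_inv_eq_mul,
      mul_right_comm, ← Real.rpow_add ht, show -m + (β + 1) = -(m - (β + 1)) by ring, mul_comm]
  have hbound : Tendsto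
      (fun t : ℝ => (t / 2) ^ β * I + c / (β + 1) * ((t / 2) ^ (-m) * t ^ (β + 1)))
      atTop (𝓝 0) := by
    simpa using ((tendsto_div_two_rpow_atTop hβ₀).mul_const I).add (hnear.const_mul _)
  refine squeeze_zero_norm' ?_ hbound
  filter_upwards [eventually_ge_atTop (2 * max T 1)] with t ht
  have ht₂ : T ≤ t / 2 ∧ 1 ≤ t / 2 := max_le_iff.1 (by linarith)
  have hD : ∀ τ ∈ Icc (t / 2) t, ‖v τ‖ ≤ c * (t / 2) ^ (-m) := fun τ hτ => by
    have hτ₀ : 0 < τ := by linarith [hτ.1]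
    calc ‖v τ‖ ≤ c * ‖τ ^ (-m)‖ := hT τ (ht₂.1.trans hτ.1)
      _ = c * τ ^ (-m) := by rw [Real.norm_of_nonneg (Real.rpow_nonneg hτ₀.le _)]
      _ ≤ c * (t / 2) ^ (-m) := mul_le_mul_of_nonneg_left
          (Real.rpow_le_rpow_of_nonpos (by linarith) hτ.1 (by linarith)) hc.le
  have hIoc : Ioc 0 t ⊆ Ici (0 : ℝ) := Ioc_subset_Ioi_self.trans Ioi_subset_Ici_self
  have hI : ∫ τ in (0 : ℝ)..t, ‖v τ‖ ≤ I := by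
    rw [intervalIntegral.integral_of_le (by linarith)]
    exact setIntegral_mono_set hv.norm (.of_forall fun _ => norm_nonneg _) hIoc.eventuallyLE
  calc ‖∫ τ in (0 : ℝ)..t, (t - τ) ^ β * v τ‖
      ≤ (t / 2) ^ β * (∫ τ in (0 : ℝ)..t, ‖v τ‖) +
          c * (t / 2) ^ (-m) * (t ^ (β + 1) / (β + 1)) :=
        norm_integral_rpow_sub_mul_le_s10 hβ hβ₀.le (by linarith)
          ((intervalIntegrable_iff_integrableOn_Ioc_of_le (by linarith)).2 (hv.mono_set hIoc)) hD
    _ ≤ (t / 2) ^ β * I + c / (β + 1) * ((t / 2) ^ (-m) * t ^ (β + 1)) := by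
      rw [show c * (t / 2) ^ (-m) * (t ^ (β + 1) / (β + 1))
        = c / (β + 1) * ((t / 2) ^ (-m) * t ^ (β + 1)) by ring]
      gcongr
      exact Real.rpow_nonneg (by linarith) β

theorem integrableOn_Ici_of_norm_le_of_isBigO_rpow {E : Type*} [NormedAddCommGroup E]
    {f : ℝ → E} {a M s : ℝ} (hf : AEStronglyMeasurable f) (hM : ∀ x ∈ Ici a, ‖f x‖ ≤ M)
    (hfO : f =O[atTop] fun x => x ^ s) (hs : s < -1) : IntegrableOn f (Ici a) := by
  have hloc : LocallyIntegrableOn f (Ici a) :=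
    (locallyIntegrableOn_iff isClosed_Ici.isLocallyClosed).2 fun _k hka hk =>
      .of_bound hk.measure_lt_top hf.restrict M
        ((ae_restrict_iff' hk.measurableSet).2 (.of_forall fun x hx => hM x (hka hx)))
  exact hloc.integrableOn_of_isBigO_atTop hfO (integrableAtFilter_rpow_atTop_iff.2 hs)

theorem isBigO_rpow_atTop_of_le {f : ℝ → ℝ} {K s : ℝ} (hf₀ : ∀ᶠ τ in atTop, 0 ≤ f τ)
    (hf : ∀ᶠ τ in atTop, f τ ≤ K * τ ^ s) : f =O[atTop] fun τ => τ ^ s :=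
  .of_bound K <| by
    filter_upwards [hf₀, hf, eventually_ge_atTop 0] with τ hτ₀ hτ hτpos
    rwa [Real.norm_of_nonneg hτ₀, Real.norm_of_nonneg (Real.rpow_nonneg hτpos s)]

theorem separation_skeleton_general (α l C : ℝ) (hα : α ∈ Set.Ioo (1 / 2 : ℝ) 1)
    (hl : 2 * α / (1 - α) < l)
    (u : ℝ → ℝ) (hmeas : Measurable u)
    (hnonneg : ∀ τ : ℝ, 0 ≤ τ → 0 ≤ u τ)
    (hbdd : ∃ M : ℝ, ∀ τ : ℝ, 0 ≤ τ → u τ ≤ M)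
    (K T : ℝ)
    (hdecay : ∀ τ : ℝ, T ≤ τ → u τ ≤ K * τ ^ (-(2 * l)))
    (c : ℝ) (hc : 0 ≤ c)
    (hineq : ∀ t : ℝ, 0 < t →
      c ≤ 3 * u t + C * (∫ τ in (0:ℝ)..t, (t - τ) ^ (α - 1) * Real.sqrt (u τ)) ^ 2 +
            C * ∫ τ in (0:ℝ)..t, (t - τ) ^ (2 * α - 2) * u τ) :
    c = 0 := by
  obtain ⟨hα₀, hα₁⟩ := hα
  obtain ⟨M, hM⟩ := hbdd
  have hl₂ : 2 < l := by
    have : 2 < 2 * α / (1 - α) := by rw [lt_div_iff₀ (by linarith)]; linarith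
    linarith
  have hu_le : ∀ᶠ τ in atTop, u τ ≤ K * τ ^ (-(2 * l)) := (eventually_ge_atTop T).mono hdecay
  have hsqrt_le : ∀ᶠ τ in atTop, √(u τ) ≤ √K * τ ^ (-l) := by
    filter_upwards [hu_le, eventually_ge_atTop 0] with τ hτ hτ₀
    calc √(u τ) ≤ √(K * τ ^ (-(2 * l))) := Real.sqrt_le_sqrt hτ
      _ = √K * τ ^ (-l) := by
        rw [Real.sqrt_mul' K (Real.rpow_nonneg hτ₀ _), Real.sqrt_eq_rpow (τ ^ _),
          ← Real.rpow_mul hτ₀]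
        ring_nf
  have hu_O := isBigO_rpow_atTop_of_le ((eventually_ge_atTop 0).mono hnonneg) hu_le
  have hsqrt_O := isBigO_rpow_atTop_of_le (.of_forall fun τ => Real.sqrt_nonneg (u τ)) hsqrt_le
  have hu_int : IntegrableOn u (Ici 0) :=
    integrableOn_Ici_of_norm_le_of_isBigO_rpow hmeas.aestronglyMeasurable
      (fun τ hτ => (Real.norm_of_nonneg (hnonneg τ hτ)).trans_le (hM τ hτ)) hu_O (by linarith)
  have hsqrt_int : IntegrableOn (fun τ => √(u τ)) (Ici 0) :=
    integrableOn_Ici_of_norm_le_of_isBigO_rpow hmeas.sqrt.aestronglyMeasurable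
      (fun τ hτ => (Real.norm_of_nonneg (Real.sqrt_nonneg _)).trans_le
        (Real.sqrt_le_sqrt (hM τ hτ))) hsqrt_O (by linarith)
  have hu_lim := hu_O.trans_tendsto (tendsto_rpow_neg_atTop (by linarith))
  have hI₁ := tendsto_integral_rpow_sub_mul_atTop_s10 (β := α - 1) (by linarith) (by linarith)
    (by linarith) hsqrt_int hsqrt_O
  have hI₂ := tendsto_integral_rpow_sub_mul_atTop_s10 (β := 2 * α - 2) (by linarith)
    (by linarith) (by linarith) hu_int hu_O
  have hrhs := ((hu_lim.const_mul 3).add ((hI₁.pow 2).const_mul C)).add (hI₂.const_mul C)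
  rw [show (3 : ℝ) * 0 + C * 0 ^ 2 + C * 0 = 0 by ring] at hrhs
  have : c ≤ 0 := ge_of_tendsto hrhs ((eventually_gt_atTop 0).mono hineq)
  linarith

/-- Deterministic skeleton of the asymptotic-separation lower bound: if `u : [0,∞) → [0,∞)` is
measurable, bounded and `u(τ) ≤ K τ^(−2l)` for `τ ≥ T` with `l > 2α/(1−α)`, and a constant
`c ≥ 0` satisfies
`c ≤ 3 u(t) + C (∫_0^t (t − τ)^(α−1) √(u(τ)) dτ)² + C ∫_0^t (t − τ)^(2α−2) u(τ) dτ`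
for all `t > 0`, then `c = 0`. -/
theorem separation_skeleton (α l C : ℝ) (hα : α ∈ Set.Ioo (1 / 2 : ℝ) 1)
    (hl : 2 * α / (1 - α) < l) (hC : 0 < C)
    (u : ℝ → ℝ) (hmeas : Measurable u)
    (hnonneg : ∀ τ : ℝ, 0 ≤ τ → 0 ≤ u τ)
    (hbdd : ∃ M : ℝ, ∀ τ : ℝ, 0 ≤ τ → u τ ≤ M)
    (K T : ℝ) (hK : 0 < K) (hT : 0 < T)
    (hdecay : ∀ τ : ℝ, T ≤ τ → u τ ≤ K * τ ^ (-(2 * l)))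
    (c : ℝ) (hc : 0 ≤ c)
    (hineq : ∀ t : ℝ, 0 < t →
      c ≤ 3 * u t + C * (∫ τ in (0:ℝ)..t, (t - τ) ^ (α - 1) * Real.sqrt (u τ)) ^ 2 +
            C * ∫ τ in (0:ℝ)..t, (t - τ) ^ (2 * α - 2) * u τ) :
    c = 0 :=
  separation_skeleton_general α l C hα hl u hmeas hnonneg hbdd K T hdecay c hc hineq
end
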